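/- arXiv:1312.0368 — 3 statements merged into one kernel-verified Lean document; each statement's English description precedes it below -/
import Mathlib

section
/- If g: [0,ε] → [0,∞) is a C^∞ strictly increasing function with g(0)=0 and g^{(l)}(0)=0 for every nonnegative integer l, and f denotes the inverse function of g, then lim_{r→0+} log(f(r))/log(r) = 0. -/
open Set Filter

/-- If `g : [0, ε] → [0, ∞)` is a `C^∞` strictly increasing function with
`g 0 = 0` and all iterated derivatives of `g` vanishing at `0`, and `f` is the inverse
function of `g`, then `log (f r) / log r → 0` as `r → 0⁺`. -/
theorem log_inverse_of_flat_tendsto_zero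
    (ε : ℝ) (hε : 0 < ε) (g f : ℝ → ℝ)
    (hsmooth : ContDiffOn ℝ (⊤ : ℕ∞) g (Icc 0 ε))
    (hmono : StrictMonoOn g (Icc 0 ε))
    (hnonneg : ∀ r ∈ Icc 0 ε, 0 ≤ g r)
    (hg0 : g 0 = 0)
    (hflat : ∀ l : ℕ, iteratedDerivWithin l g (Icc 0 ε) 0 = 0)
    (hinv : ∀ r ∈ Icc 0 ε, f (g r) = r)
    (hinv' : ∀ s ∈ Icc 0 (g ε), g (f s) = s) :
    Tendsto (fun r => Real.log (f r) / Real.log r) (nhdsWithin 0 (Ioi 0)) (nhds 0) := by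
  have hεmem : ε ∈ Icc 0 ε := ⟨hε.le, le_refl ε⟩
  have h0mem : (0 : ℝ) ∈ Icc 0 ε := ⟨le_refl 0, hε.le⟩
  have hcont : ContinuousOn g (Icc 0 ε) := hsmooth.continuousOn
  -- η = min ε 1
  set η : ℝ := min ε 1 with hη_def
  have hη_pos : 0 < η := lt_min hε one_pos
  have hη_mem : η ∈ Icc 0 ε := ⟨hη_pos.le, min_le_left _ _⟩
  have hgη_pos : 0 < g η := by
    have := hmono h0mem hη_mem hη_pos
    rwa [hg0] at this
  have hgη_le : g η ≤ g ε := hmono.monotoneOn hη_mem hεmem (min_le_left _ _)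
  -- basic facts about f on (0, g η)
  have key : ∀ r : ℝ, 0 < r → r < g η →
      f r ∈ Icc 0 ε ∧ g (f r) = r ∧ 0 < f r ∧ f r < 1 := by
    intro r hr hr'
    have hrIcc : r ∈ Icc 0 (g ε) := ⟨hr.le, (hr'.le.trans hgη_le)⟩
    have : r ∈ Icc (g 0) (g ε) := by rwa [hg0]
    obtain ⟨x, hx, hgx⟩ := intermediate_value_Icc hε.le hcont this
    have hfr : f r = x := by rw [← hgx, hinv x hx]
    have hfrIcc : f r ∈ Icc 0 ε := hfr ▸ hx
    have hgfr : g (f r) = r := hinv' r hrIcc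
    have hfr_pos : 0 < f r := by
      rcases lt_or_eq_of_le hfrIcc.1 with h | h
      · exact h
      · exfalso; rw [← h] at hgfr; rw [hg0] at hgfr; exact hr.ne hgfr
    have hfr_lt_η : f r < η := by
      by_contra hc
      push_neg at hc
      have := hmono.monotoneOn hη_mem hfrIcc hc
      rw [hgfr] at this
      exact absurd this (not_le.2 hr')
    exact ⟨hfrIcc, hgfr, hfr_pos, hfr_lt_η.trans_le (min_le_right _ _)⟩
  rw [Metric.tendsto_nhds]
  intro δ hδ
  -- choose n with 1/(n+1) < δ/2
  obtain ⟨n, hn⟩ := exists_nat_gt (2 / δ)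
  have hn1 : (2 : ℝ) < δ * (n + 1) := by
    have hpos : (0:ℝ) < n + 1 := by positivity
    rw [div_lt_iff₀ hδ] at hn
    calc (2:ℝ) < δ * n := by linarith [hn]
    _ ≤ δ * (n + 1) := by nlinarith
  -- Taylor bound
  obtain ⟨C, hC⟩ := exists_taylor_mean_remainder_bound (f := g) (n := n) hε.le
    (hsmooth.of_le (by exact_mod_cast le_top))
  have htaylor0 : ∀ x : ℝ, taylorWithinEval g n (Icc 0 ε) 0 x = 0 := by
    intro x
    rw [taylor_within_apply]
    apply Finset.sum_eq_zero
    intro k _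
    rw [hflat k]
    simp
  set C' : ℝ := max C 1 with hC'_def
  have hC'1 : (1:ℝ) ≤ C' := le_max_right _ _
  have hC'pos : (0:ℝ) < C' := lt_of_lt_of_le one_pos hC'1
  have hlogC' : 0 ≤ Real.log C' := Real.log_nonneg hC'1
  have hbound : ∀ x ∈ Icc 0 ε, g x ≤ C' * x ^ (n + 1) := by
    intro x hx
    have := hC x hx
    rw [htaylor0 x, sub_zero, sub_zero] at this
    have h1 : g x ≤ C * x ^ (n+1) := (le_abs_self _).trans (by rwa [Real.norm_eq_abs] at this)
    have : C * x ^ (n+1) ≤ C' * x ^ (n+1) := by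
      apply mul_le_mul_of_nonneg_right (le_max_left _ _) (pow_nonneg hx.1 _)
    linarith
  -- eventual bound
  set B : ℝ := 2 * Real.log C' / δ with hB_def
  have hB_nonneg : 0 ≤ B := by positivity
  set m : ℝ := min (g η) (min 1 (Real.exp (-B))) with hm_def
  have hm_pos : 0 < m := lt_min hgη_pos (lt_min one_pos (Real.exp_pos _))
  filter_upwards [Ioo_mem_nhdsGT_of_mem (left_mem_Ico.2 hm_pos)] with r hr
  obtain ⟨hr0, hrm⟩ := hr
  have hr_gη : r < g η := hrm.trans_le (min_le_left _ _)
  have hr_1 : r < 1 := hrm.trans_le ((min_le_right _ _).trans (min_le_left _ _))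
  have hr_expB : r < Real.exp (-B) := hrm.trans_le ((min_le_right _ _).trans (min_le_right _ _))
  obtain ⟨hfrIcc, hgfr, hfr_pos, hfr_lt1⟩ := key r hr0 hr_gη
  have hlogr_neg : Real.log r < 0 := Real.log_neg hr0 hr_1
  have hlogfr_neg : Real.log (f r) < 0 := Real.log_neg hfr_pos hfr_lt1
  have hratio_nonneg : 0 ≤ Real.log (f r) / Real.log r :=
    div_nonneg_of_nonpos hlogfr_neg.le hlogr_neg.le
  -- r ≤ C' * (f r)^(n+1)
  have hineq : r ≤ C' * (f r) ^ (n + 1) := by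
    have := hbound (f r) hfrIcc; rwa [hgfr] at this
  -- take logs
  have hlog_ineq : Real.log r ≤ Real.log C' + (n + 1 : ℝ) * Real.log (f r) := by
    calc Real.log r ≤ Real.log (C' * (f r) ^ (n + 1)) :=
          Real.log_le_log hr0 hineq
    _ = Real.log C' + (n + 1 : ℝ) * Real.log (f r) := by
          rw [Real.log_mul hC'pos.ne' (by positivity), Real.log_pow]
          push_cast
          ring
  -- -log r > B
  have hL : B < -Real.log r := by
    have := Real.log_lt_log hr0 hr_expB
    rw [Real.log_exp] at this
    linarith
  -- conclude ratio < δ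
  set L : ℝ := -Real.log r with hL_def
  have hLpos : 0 < L := by simp only [hL_def]; linarith
  have hmain : Real.log (f r) / Real.log r < δ := by
    rw [div_lt_iff_of_neg hlogr_neg]
    -- goal : δ * log r < log (f r)
    have h1 : (Real.log r - Real.log C') / (n + 1 : ℝ) ≤ Real.log (f r) := by
      rw [div_le_iff₀ (by positivity : (0:ℝ) < (n:ℝ) + 1)]
      linarith
    have h2 : δ * Real.log r < (Real.log r - Real.log C') / (n + 1 : ℝ) := by
      rw [lt_div_iff₀ (by positivity : (0:ℝ) < (n:ℝ) + 1)]
      -- δ * log r * (n+1) < log r - log C'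
      -- i.e. L + log C' < δ * (n+1) * L
      have hB2 : δ * L > 2 * Real.log C' := by
        have : δ * B = 2 * Real.log C' := by
          rw [hB_def]; field_simp
        nlinarith [mul_lt_mul_of_pos_left hL hδ]
      have hlr : Real.log r = -L := by simp [hL_def]
      rw [hlr]
      nlinarith [mul_pos hLpos (by linarith : (0:ℝ) < δ * (n+1) - 2)]
    linarith
  rw [Real.dist_eq, abs_sub_comm, abs_of_nonpos (by linarith)]
  linarith
end

section
/- Let D ⊂ ℂⁿ be a convex domain, a ∈ D, and v a nonzero vector in ℂⁿ. Let δ_D(a,v) be the Euclidean distance from a to ∂D along the complex line L(a,v) = {a + λv : λ ∈ ℂ}. Then the Kobayashi infinitesimal metric satisfies |v| / (2 δ_D(a,v)) ≤ K_D(a,v) ≤ |v| / δ_D(a,v). -/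
/-!
The disc `λ ↦ a + λ δ v / ‖v‖` lies in `D`, which gives the upper bound. For the lower bound take
a point `a + m v` of `∂D` on the line. Since `D` is convex and open, Hahn–Banach gives a complex
functional `Λ` with `Re Λ < Re Λ(a + m v)` on `D`, so `Λ ∘ f` maps the disc into a half-plane
for every holomorphic disc `f` through `a`. The Schwarz lemma for the half-plane
`{Re < c}`, `|h'(0)| ≤ 2 (c - Re h(0))`, then gives `|μ| ≤ 2 |m|` whenever `f'(0) = μ v`, that is
`α⁻¹ ‖v‖ ≤ 2 ‖m v‖` for every admissible scale `α`. If the whole line lies in `D`, both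
`δ_D(a, v)` and `K_D(a, v)` vanish.
-/

open Set Metric

/-- The Kobayashi infinitesimal pseudometric of a domain `D` in a complex normed space:
`K_D(p, v) = inf {α > 0 | ∃ holomorphic f : Δ → D, f 0 = p, f' 0 = v / α}`. -/
noncomputable def kobMetric {E : Type*} [NormedAddCommGroup E] [NormedSpace ℂ E]
    (D : Set E) (p v : E) : ℝ :=
  sInf {α : ℝ | 0 < α ∧ ∃ f : ℂ → E, DifferentiableOn ℂ f (ball (0:ℂ) 1) ∧
    MapsTo f (ball (0:ℂ) 1) D ∧ f 0 = p ∧ fderiv ℂ f 0 1 = α⁻¹ • v}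

/-- The Euclidean distance from `a` to `∂D` along the complex line `{a + λ • v | λ ∈ ℂ}`. -/
noncomputable def deltaLine {E : Type*} [NormedAddCommGroup E] [NormedSpace ℂ E]
    (D : Set E) (a v : E) : ℝ :=
  Metric.infDist a (frontier D ∩ {z | ∃ l : ℂ, z = a + l • v})

open ComplexConjugate in
theorem Complex.norm_sub_lt_norm_add_conj {u w : ℂ} (hu : 0 < u.re) (hw : 0 < w.re) :
    ‖u - w‖ < ‖u + conj w‖ := by
  rw [← sq_lt_sq₀ (norm_nonneg _) (norm_nonneg _), ← Complex.normSq_eq_norm_sq,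
    ← Complex.normSq_eq_norm_sq]
  simp only [Complex.normSq_apply, Complex.sub_re, Complex.sub_im, Complex.add_re,
    Complex.add_im, Complex.conj_re, Complex.conj_im]
  nlinarith

open ComplexConjugate in
theorem Complex.norm_deriv_le_of_re_lt {h : ℂ → ℂ} {c : ℝ}
    (hd : DifferentiableOn ℂ h (ball 0 1)) (hc : ∀ z ∈ ball (0 : ℂ) 1, (h z).re < c) :
    ‖deriv h 0‖ ≤ 2 * (c - (h 0).re) := by
  have h0 : (0 : ℂ) ∈ ball (0 : ℂ) 1 := mem_ball_self one_pos
  have hre : ∀ z ∈ ball (0 : ℂ) 1, 0 < ((c : ℂ) - h z).re := fun z hz => by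
    simpa using hc z hz
  set w := (c : ℂ) - h 0
  -- `g` is `h` followed by the Cayley transform of `{re < c}` onto the disc that sends `h 0` to `0`
  set den : ℂ → ℂ := fun z => (c : ℂ) - h z + conj w
  set g : ℂ → ℂ := fun z => (h 0 - h z) / den z
  have hlt : ∀ z ∈ ball (0 : ℂ) 1, ‖h 0 - h z‖ < ‖den z‖ := fun z hz => by
    simpa [den, w] using norm_sub_lt_norm_add_conj (hre z hz) (hre 0 h0)
  have hden : ∀ z ∈ ball (0 : ℂ) 1, den z ≠ 0 := fun z hz =>
    norm_pos_iff.1 ((norm_nonneg _).trans_lt (hlt z hz))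
  have hgd : DifferentiableOn ℂ g (ball 0 1) :=
    ((differentiableOn_const _).sub hd).div (((differentiableOn_const _).sub hd).add_const _) hden
  have hg : MapsTo g (ball 0 1) (closedBall (g 0) 1) := fun z hz => by
    simpa [g, norm_div] using (div_lt_one ((norm_nonneg _).trans_lt (hlt z hz))).2 (hlt z hz) |>.le
  have hden0 : den 0 = (2 * w.re : ℝ) := by simpa [den] using Complex.add_conj w
  have hh' : HasDerivAt h (deriv h 0) 0 :=
    (hd.differentiableAt (isOpen_ball.mem_nhds h0)).hasDerivAt
  have hg' : deriv g 0 = -deriv h 0 / den 0 := by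
    have : HasDerivAt g _ 0 := ((hasDerivAt_const (0 : ℂ) (h 0)).sub hh').div
      (((hasDerivAt_const (0 : ℂ) (c : ℂ)).sub hh').add_const (conj w)) (hden 0 h0)
    rw [this.deriv]
    field_simp [hden 0 h0]
    simp
  have hw : 0 < 2 * w.re := by linarith [hre 0 h0]
  have := Complex.norm_deriv_le_div_of_mapsTo_ball hgd hg one_pos
  rw [hg', norm_div, norm_neg, hden0, Complex.norm_real, Real.norm_of_nonneg hw.le,
    div_le_iff₀ hw] at this
  simpa [w] using this

section

variable {E : Type*} [NormedAddCommGroup E] [NormedSpace ℂ E]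

def kobScales (D : Set E) (p v : E) : Set ℝ :=
  {α : ℝ | 0 < α ∧ ∃ f : ℂ → E, DifferentiableOn ℂ f (ball (0:ℂ) 1) ∧
    MapsTo f (ball (0:ℂ) 1) D ∧ f 0 = p ∧ fderiv ℂ f 0 1 = α⁻¹ • v}

theorem kobMetric_eq_sInf_kobScales (D : Set E) (p v : E) :
    kobMetric D p v = sInf (kobScales D p v) := rfl

theorem kobMetric_nonneg (D : Set E) (p v : E) : 0 ≤ kobMetric D p v :=
  Real.sInf_nonneg fun _ hα => hα.1.le

variable {D : Set E} {a v : E}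

theorem exists_norm_le_add_smul_mem_frontier (hD : IsOpen D) (ha : a ∈ D) {l : ℂ}
    (hl : a + l • v ∉ D) : ∃ m : ℂ, ‖m‖ ≤ ‖l‖ ∧ a + m • v ∈ frontier D := by
  set φ : ℝ → E := fun t => a + ((t : ℂ) * l) • v
  have hφ : Continuous φ := by fun_prop
  have hconn : IsPreconnected (φ '' Icc 0 1) := isPreconnected_Icc.image φ hφ.continuousOn
  have hnot : ¬ φ '' Icc 0 1 ⊆ D := fun hsub =>
    hl (by simpa [φ] using hsub (mem_image_of_mem φ (right_mem_Icc.2 zero_le_one)))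
  have hclosure : ¬ closure D ∩ φ '' Icc 0 1 ⊆ D := fun hsub =>
    hnot (hconn.subset_of_closure_inter_subset hD
      ⟨φ 0, mem_image_of_mem φ (left_mem_Icc.2 zero_le_one), by simpa [φ] using ha⟩ hsub)
  obtain ⟨_, ⟨hcl, t, ht, rfl⟩, hD'⟩ := not_subset.1 hclosure
  refine ⟨t * l, ?_, hD.frontier_eq ▸ ⟨hcl, hD'⟩⟩
  rw [norm_mul, Complex.norm_real, Real.norm_of_nonneg ht.1]
  exact mul_le_of_le_one_left (norm_nonneg l) ht.2

theorem deltaLine_le_norm_smul {m : ℂ} (hm : a + m • v ∈ frontier D) :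
    deltaLine D a v ≤ ‖m • v‖ :=
  calc deltaLine D a v ≤ dist a (a + m • v) := infDist_le_dist_of_mem ⟨hm, m, rfl⟩
    _ = ‖m • v‖ := by rw [dist_self_add_right]

theorem add_smul_mem_of_norm_smul_lt_deltaLine (hD : IsOpen D) (ha : a ∈ D) {l : ℂ}
    (hl : ‖l • v‖ < deltaLine D a v) : a + l • v ∈ D := by
  by_contra hl'
  obtain ⟨m, hm, hfr⟩ := exists_norm_le_add_smul_mem_frontier hD ha hl'
  have := deltaLine_le_norm_smul hfr
  rw [norm_smul] at this hl
  linarith [mul_le_mul_of_nonneg_right hm (norm_nonneg v)]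

theorem deltaLine_eq_zero_of_forall_add_smul_mem (hD : IsOpen D) (h : ∀ l : ℂ, a + l • v ∈ D) :
    deltaLine D a v = 0 := by
  have : frontier D ∩ {z | ∃ l : ℂ, z = a + l • v} = ∅ := by
    refine eq_empty_of_forall_notMem fun z ⟨hz, l, hzl⟩ => ?_
    exact (hD.frontier_eq ▸ hz).2 (hzl ▸ h l)
  rw [deltaLine, this, infDist_empty]

theorem deltaLine_pos (hD : IsOpen D) (ha : a ∈ D) {m : ℂ} (hm : a + m • v ∈ frontier D) :
    0 < deltaLine D a v := by
  obtain ⟨ε, hε, hball⟩ := Metric.isOpen_iff.1 hD a ha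
  have hF : (frontier D ∩ {z | ∃ l : ℂ, z = a + l • v}).Nonempty := ⟨_, hm, m, rfl⟩
  refine hε.trans_le ((le_infDist hF).2 fun z ⟨hz, _⟩ => ?_)
  by_contra! hlt
  exact (hD.frontier_eq ▸ hz).2 (hball (mem_ball'.2 hlt))

theorem kobMetric_le {α : ℝ} (hα : α ∈ kobScales D a v) : kobMetric D a v ≤ α :=
  csInf_le ⟨0, fun _ hβ => hβ.1.le⟩ hα

theorem inv_mem_kobScales {r : ℝ} (hr : 0 < r) (h : ∀ l : ℂ, ‖l‖ < r → a + l • v ∈ D) :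
    r⁻¹ ∈ kobScales D a v := by
  have hf : ∀ z : ℂ, HasDerivAt (fun z : ℂ => a + z • (r : ℂ) • v) ((r : ℂ) • v) z := fun z => by
    simpa using ((hasDerivAt_id z).smul_const ((r : ℂ) • v)).const_add a
  refine ⟨inv_pos.2 hr, _, fun z _ => (hf z).differentiableAt.differentiableWithinAt,
    fun z hz => ?_, by simp, ?_⟩
  · change a + z • (r : ℂ) • v ∈ D
    rw [smul_smul]
    refine h _ ?_
    rw [norm_mul, Complex.norm_real, Real.norm_of_nonneg hr.le]
    exact mul_lt_of_lt_one_left hr (mem_ball_zero_iff.1 hz)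
  · rw [fderiv_apply_one_eq_deriv, (hf 0).deriv, inv_inv, Complex.coe_smul]

theorem kobMetric_eq_zero_of_forall_add_smul_mem (h : ∀ l : ℂ, a + l • v ∈ D) :
    kobMetric D a v = 0 := by
  refine le_antisymm (le_of_forall_gt_imp_ge_of_dense fun ε hε => ?_) (kobMetric_nonneg D a v)
  simpa using kobMetric_le (inv_mem_kobScales (inv_pos.2 hε) fun l _ => h l)

theorem Convex.norm_le_two_mul_of_mapsTo_ball (hconv : Convex ℝ D) (hD : IsOpen D)
    {f : ℂ → E} (hfd : DifferentiableOn ℂ f (ball 0 1)) (hfD : MapsTo f (ball 0 1) D)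
    {μ l : ℂ} (hf' : fderiv ℂ f 0 1 = μ • v) (hl : f 0 + l • v ∉ D) : ‖μ‖ ≤ 2 * ‖l‖ := by
  obtain ⟨Λ, hΛ⟩ := RCLike.geometric_hahn_banach_open_point (𝕜 := ℂ) hconv hD hl
  have h0 : (0 : ℂ) ∈ ball (0 : ℂ) 1 := mem_ball_self one_pos
  have hderiv : deriv (Λ ∘ f) 0 = μ * Λ v := by
    have := Λ.hasFDerivAt.comp (0 : ℂ) (hfd.differentiableAt (isOpen_ball.mem_nhds h0)).hasFDerivAt
    rw [this.hasDerivAt.deriv]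
    simp [hf']
  have hschwarz := Complex.norm_deriv_le_of_re_lt (Λ.differentiable.comp_differentiableOn hfd)
    fun z hz => hΛ _ (hfD hz)
  simp only [Function.comp_apply, RCLike.re_to_complex] at hschwarz hΛ
  have hgap : (Λ (f 0 + l • v)).re - (Λ (f 0)).re = (l * Λ v).re := by simp
  have hgap_pos := sub_pos.2 (hΛ _ (hfD h0))
  rw [hderiv, norm_mul, hgap] at hschwarz
  rw [hgap] at hgap_pos
  have hΛv : 0 < ‖Λ v‖ := by
    refine norm_pos_iff.2 fun h => ?_
    simp [h] at hgap_pos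
  refine le_of_mul_le_mul_right ?_ hΛv
  calc ‖μ‖ * ‖Λ v‖ ≤ 2 * (l * Λ v).re := hschwarz
    _ ≤ 2 * (‖l‖ * ‖Λ v‖) := by gcongr; exact (Complex.re_le_norm _).trans_eq (norm_mul _ _)
    _ = 2 * ‖l‖ * ‖Λ v‖ := by ring

theorem Convex.inv_mul_norm_le_two_mul_deltaLine (hconv : Convex ℝ D) (hD : IsOpen D)
    {m : ℂ} (hm : a + m • v ∈ frontier D) {α : ℝ} (hα : α ∈ kobScales D a v) :
    α⁻¹ * ‖v‖ ≤ 2 * deltaLine D a v := by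
  obtain ⟨hα, f, hfd, hfD, hf0, hf'⟩ := hα
  have hF : (frontier D ∩ {z | ∃ l : ℂ, z = a + l • v}).Nonempty := ⟨_, hm, m, rfl⟩
  rw [← div_le_iff₀' two_pos]
  refine (le_infDist hF).2 fun z ⟨hz, l, hzl⟩ => ?_
  have hl : f 0 + l • v ∉ D := hf0 ▸ hzl ▸ (hD.frontier_eq ▸ hz).2
  have := hconv.norm_le_two_mul_of_mapsTo_ball hD hfd hfD (μ := (α⁻¹ : ℝ))
    (by rw [hf', Complex.coe_smul]) hl
  rw [Complex.norm_real, Real.norm_of_nonneg (inv_nonneg.2 hα.le)] at this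
  rw [hzl, dist_self_add_right, norm_smul, div_le_iff₀' two_pos, ← mul_assoc]
  exact mul_le_mul_of_nonneg_right this (norm_nonneg v)

end

theorem kobayashi_convex_estimate_general
    (n : ℕ) (D : Set (EuclideanSpace ℂ (Fin n)))
    (hconv : Convex ℝ D) (hopen : IsOpen D)
    (a : EuclideanSpace ℂ (Fin n)) (ha : a ∈ D)
    (v : EuclideanSpace ℂ (Fin n)) :
    ‖v‖ / (2 * deltaLine D a v) ≤ kobMetric D a v ∧
      kobMetric D a v ≤ ‖v‖ / deltaLine D a v := by
  by_cases hline : ∀ l : ℂ, a + l • v ∈ D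
  · rw [deltaLine_eq_zero_of_forall_add_smul_mem hopen hline,
      kobMetric_eq_zero_of_forall_add_smul_mem hline]
    simp
  obtain ⟨l, hl⟩ := not_forall.1 hline
  obtain ⟨m, -, hm⟩ := exists_norm_le_add_smul_mem_frontier hopen ha hl
  have hv : 0 < ‖v‖ := norm_pos_iff.2 fun hv => by simp [hv, ha] at hl
  have hδ := deltaLine_pos hopen ha hm
  have hmem : ‖v‖ / deltaLine D a v ∈ kobScales D a v := by
    simpa using inv_mem_kobScales (div_pos hδ hv) fun l hl =>
      add_smul_mem_of_norm_smul_lt_deltaLine hopen ha (by rwa [norm_smul, ← lt_div_iff₀ hv])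
  refine ⟨?_, kobMetric_le hmem⟩
  rw [kobMetric_eq_sInf_kobScales]
  refine le_csInf ⟨_, hmem⟩ fun α hα => ?_
  rw [div_le_iff₀ (by positivity), ← inv_mul_le_iff₀ hα.1]
  exact hconv.inv_mul_norm_le_two_mul_deltaLine hopen hm hα

/-- Graham, Frankel: for a convex domain `D ⊆ ℂⁿ`, `a ∈ D` and `v ≠ 0`,
`‖v‖ / (2 δ_D(a,v)) ≤ K_D(a,v) ≤ ‖v‖ / δ_D(a,v)`, where `δ_D(a,v)` is the distance from
`a` to `∂D` along the complex line through `a` in direction `v`. -/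
theorem kobayashi_convex_estimate
    (n : ℕ) (D : Set (EuclideanSpace ℂ (Fin n)))
    (hconv : Convex ℝ D) (hopen : IsOpen D) (hne : D.Nonempty)
    (a : EuclideanSpace ℂ (Fin n)) (ha : a ∈ D)
    (v : EuclideanSpace ℂ (Fin n)) (hv : v ≠ 0) :
    ‖v‖ / (2 * deltaLine D a v) ≤ kobMetric D a v ∧
      kobMetric D a v ≤ ‖v‖ / deltaLine D a v :=
  kobayashi_convex_estimate_general n D hconv hopen a ha v
end

section
/- Gromov hyperbolicity of geodesic metric spaces is invariant under bi-Lipschitz equivalence of the distance: if d₁ and d₂ are geodesic distances on a set X with A^{-1} d₁ ≤ d₂ ≤ A d₁ for some A ≥ 1, and (X, d₁) is Gromov hyperbolic, then (X, d₂) is Gromov hyperbolic. -/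
/-- `γ` restricted to `[a, b]` is a geodesic for the distance function `d`. -/
def IsGeodesicOn {X : Type*} (d : X → X → ℝ) (γ : ℝ → X) (a b : ℝ) : Prop :=
  a ≤ b ∧ ∀ s ∈ Set.Icc a b, ∀ t ∈ Set.Icc a b, d (γ s) (γ t) = |s - t|

/-- Thin-triangles condition with constant `δ`: each side of every geodesic triangle is
contained in the `δ`-neighbourhood of the union of the other two sides. -/
def GromovHyperbolicWith {X : Type*} (δ : ℝ) (d : X → X → ℝ) : Prop :=
  ∀ (γ₁ γ₂ γ₃ : ℝ → X) (a₁ b₁ a₂ b₂ a₃ b₃ : ℝ),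
    IsGeodesicOn d γ₁ a₁ b₁ → IsGeodesicOn d γ₂ a₂ b₂ → IsGeodesicOn d γ₃ a₃ b₃ →
    γ₁ b₁ = γ₂ a₂ → γ₂ b₂ = γ₃ a₃ → γ₃ b₃ = γ₁ a₁ →
    ∀ t ∈ Set.Icc a₁ b₁,
      (∃ s ∈ Set.Icc a₂ b₂, d (γ₁ t) (γ₂ s) ≤ δ) ∨
      (∃ s ∈ Set.Icc a₃ b₃, d (γ₁ t) (γ₃ s) ≤ δ)

/-- `(X, d)` is Gromov hyperbolic: `δ`-hyperbolic for some `δ > 0`. -/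
def GromovHyperbolic {X : Type*} (d : X → X → ℝ) : Prop :=
  ∃ δ > (0:ℝ), GromovHyperbolicWith δ d

/-- `(X, d)` is a geodesic space: any two points are joined by a geodesic. -/
def GeodesicSpaceD {X : Type*} (d : X → X → ℝ) : Prop :=
  ∀ x y : X, ∃ (γ : ℝ → X) (a b : ℝ), IsGeodesicOn d γ a b ∧ γ a = x ∧ γ b = y

/-- `d` is a distance function on `X`. -/
def IsMetricD {X : Type*} (d : X → X → ℝ) : Prop :=
  (∀ x y : X, d x y = 0 ↔ x = y) ∧ (∀ x y : X, d x y = d y x) ∧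
  (∀ x y z : X, d x z ≤ d x y + d y z)

namespace GHBL

variable {X : Type*}

lemma d_nonneg {d : X → X → ℝ} (hm : IsMetricD d) (x y : X) : 0 ≤ d x y := by
  have h1 := hm.2.2 x y x
  have h2 : d x x = 0 := (hm.1 x x).2 rfl
  have h3 := hm.2.1 y x
  linarith [hm.2.1 x y]

lemma geo_rev {d : X → X → ℝ} {γ : ℝ → X} {a b : ℝ}
    (h : IsGeodesicOn d γ a b) : IsGeodesicOn d (fun t => γ (a + b - t)) a b := by
  refine ⟨h.1, fun s hs t ht => ?_⟩
  have hs' : a + b - s ∈ Set.Icc a b := ⟨by linarith [hs.2], by linarith [hs.1]⟩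
  have ht' : a + b - t ∈ Set.Icc a b := ⟨by linarith [ht.2], by linarith [ht.1]⟩
  rw [h.2 _ hs' _ ht', abs_sub_comm]
  congr 1; ring

lemma geo_restrict {d : X → X → ℝ} {γ : ℝ → X} {a b a' b' : ℝ}
    (h : IsGeodesicOn d γ a b) (ha : a ≤ a') (hab : a' ≤ b') (hb : b' ≤ b) :
    IsGeodesicOn d γ a' b' := by
  refine ⟨hab, fun s hs t ht => ?_⟩
  exact h.2 s ⟨le_trans ha hs.1, le_trans hs.2 hb⟩ t ⟨le_trans ha ht.1, le_trans ht.2 hb⟩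

/-- Lemma A: a geodesic with endpoints on an `L`-Lipschitz path stays within
`δ * n + 1` of the path, provided `L * (v - u) ≤ 2 ^ n`. -/
lemma lemmaA {d : X → X → ℝ} (hm : IsMetricD d) (hgeo : GeodesicSpaceD d)
    {δ : ℝ} (hδ : 0 < δ) (hhyp : GromovHyperbolicWith δ d)
    {L : ℝ} (c : ℝ → X) :
    ∀ n : ℕ, ∀ u v α β : ℝ, ∀ σ : ℝ → X, u ≤ v →
      (∀ s ∈ Set.Icc u v, ∀ t ∈ Set.Icc u v, d (c s) (c t) ≤ L * |s - t|) →
      IsGeodesicOn d σ α β → σ α = c u → σ β = c v →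
      L * (v - u) ≤ 2 ^ n →
      ∀ s ∈ Set.Icc α β, ∃ w ∈ Set.Icc u v, d (σ s) (c w) ≤ δ * n + 1 := by
  intro n
  induction n with
  | zero =>
    intro u v α β σ huv hc hσ hσa hσb hn s hs
    refine ⟨u, ⟨le_refl u, huv⟩, ?_⟩
    have h1 : d (σ s) (c u) = |s - α| := by rw [← hσa]; exact hσ.2 s hs α ⟨le_refl α, hσ.1⟩
    have h2 : d (σ α) (σ β) = |α - β| := hσ.2 α ⟨le_refl α, hσ.1⟩ β ⟨hσ.1, le_refl β⟩
    have h3 : d (c u) (c v) ≤ L * |u - v| := hc u ⟨le_refl u, huv⟩ v ⟨huv, le_refl v⟩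
    rw [hσa, hσb] at h2
    have habs1 : |s - α| = s - α := abs_of_nonneg (by linarith [hs.1])
    have habs2 : |α - β| = β - α := by rw [abs_sub_comm]; exact abs_of_nonneg (by linarith [hσ.1])
    have habs3 : |u - v| = v - u := by rw [abs_sub_comm]; exact abs_of_nonneg (by linarith)
    rw [habs3] at h3
    simp only [Nat.cast_zero, mul_zero, zero_add]
    rw [h1, habs1]
    have : (2:ℝ)^(0:ℕ) = 1 := by norm_num
    linarith [hs.2, h2, habs2 ▸ h2]
  | succ n ih =>
    intro u v α β σ huv hc hσ hσa hσb hn s hs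
    set m := (u + v) / 2 with hm_def
    have hum : u ≤ m := by simp only [hm_def]; linarith
    have hmv : m ≤ v := by simp only [hm_def]; linarith
    obtain ⟨g₁, α₁, β₁, hg₁, e₁a, e₁b⟩ := hgeo (c u) (c m)
    obtain ⟨g₂, α₂, β₂, hg₂, e₂a, e₂b⟩ := hgeo (c m) (c v)
    -- triangle : σ, reverse g₂, reverse g₁
    have hclose1 : σ β = (fun t => g₂ (α₂ + β₂ - t)) α₂ := by
      simp only; rw [show α₂ + β₂ - α₂ = β₂ by ring, e₂b, hσb]
    have hclose2 : (fun t => g₂ (α₂ + β₂ - t)) β₂ = (fun t => g₁ (α₁ + β₁ - t)) α₁ := by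
      simp only; rw [show α₂ + β₂ - β₂ = α₂ by ring, show α₁ + β₁ - α₁ = β₁ by ring, e₂a, e₁b]
    have hclose3 : (fun t => g₁ (α₁ + β₁ - t)) β₁ = σ α := by
      simp only; rw [show α₁ + β₁ - β₁ = α₁ by ring, e₁a, hσa]
    have key := hhyp σ (fun t => g₂ (α₂ + β₂ - t)) (fun t => g₁ (α₁ + β₁ - t))
      α β α₂ β₂ α₁ β₁ hσ (geo_rev hg₂) (geo_rev hg₁) hclose1 hclose2 hclose3 s hs
    have hhalf1 : L * (m - u) ≤ 2 ^ n := by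
      have : L * (m - u) = L * (v - u) / 2 := by rw [hm_def]; ring
      rw [this]
      have : (2:ℝ)^(n+1) = 2 * 2^n := by ring
      linarith [hn, this ▸ hn]
    have hhalf2 : L * (v - m) ≤ 2 ^ n := by
      have : L * (v - m) = L * (v - u) / 2 := by rw [hm_def]; ring
      rw [this]
      have h2 : (2:ℝ)^(n+1) = 2 * 2^n := by ring
      linarith [hn]
    have hc1 : ∀ s ∈ Set.Icc u m, ∀ t ∈ Set.Icc u m, d (c s) (c t) ≤ L * |s - t| :=
      fun s hs t ht => hc s ⟨hs.1, le_trans hs.2 hmv⟩ t ⟨ht.1, le_trans ht.2 hmv⟩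
    have hc2 : ∀ s ∈ Set.Icc m v, ∀ t ∈ Set.Icc m v, d (c s) (c t) ≤ L * |s - t| :=
      fun s hs t ht => hc s ⟨le_trans hum hs.1, hs.2⟩ t ⟨le_trans hum ht.1, ht.2⟩
    rcases key with ⟨s', hs', hd⟩ | ⟨s', hs', hd⟩
    · -- point on reverse g₂ (side from c v to c m)
      have hmem : α₂ + β₂ - s' ∈ Set.Icc α₂ β₂ := ⟨by linarith [hs'.2], by linarith [hs'.1]⟩
      obtain ⟨w, hw, hdw⟩ := ih m v α₂ β₂ g₂ hmv hc2 hg₂ e₂a e₂b hhalf2 _ hmem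
      refine ⟨w, ⟨le_trans hum hw.1, hw.2⟩, ?_⟩
      have := hm.2.2 (σ s) (g₂ (α₂ + β₂ - s')) (c w)
      push_cast
      push_cast at hdw
      linarith
    · have hmem : α₁ + β₁ - s' ∈ Set.Icc α₁ β₁ := ⟨by linarith [hs'.2], by linarith [hs'.1]⟩
      obtain ⟨w, hw, hdw⟩ := ih u m α₁ β₁ g₁ hum hc1 hg₁ e₁a e₁b hhalf1 _ hmem
      refine ⟨w, ⟨hw.1, le_trans hw.2 hmv⟩, ?_⟩
      have := hm.2.2 (σ s) (g₁ (α₁ + β₁ - s')) (c w)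
      push_cast
      push_cast at hdw
      linarith

lemma lip_concat {d : X → X → ℝ} (hm : IsMetricD d) {c : ℝ → X} {u m v L : ℝ}
    (hum : u ≤ m) (hmv : m ≤ v)
    (h1 : ∀ s ∈ Set.Icc u m, ∀ t ∈ Set.Icc u m, d (c s) (c t) ≤ L * |s - t|)
    (h2 : ∀ s ∈ Set.Icc m v, ∀ t ∈ Set.Icc m v, d (c s) (c t) ≤ L * |s - t|) :
    ∀ s ∈ Set.Icc u v, ∀ t ∈ Set.Icc u v, d (c s) (c t) ≤ L * |s - t| := by
  have key : ∀ s ∈ Set.Icc u v, ∀ t ∈ Set.Icc u v, s ≤ t → d (c s) (c t) ≤ L * |s - t| := by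
    intro s hs t ht hst
    rcases le_total t m with htm | hmt
    · exact h1 s ⟨hs.1, le_trans hst htm⟩ t ⟨ht.1, htm⟩
    · rcases le_total m s with hms | hsm
      · exact h2 s ⟨hms, hs.2⟩ t ⟨le_trans hms hst, ht.2⟩
      · have a1 := h1 s ⟨hs.1, hsm⟩ m ⟨hum, le_refl m⟩
        have a2 := h2 m ⟨le_refl m, hmv⟩ t ⟨hmt, ht.2⟩
        have tri := hm.2.2 (c s) (c m) (c t)
        have e1 : |s - m| = m - s := by rw [abs_sub_comm]; exact abs_of_nonneg (by linarith)
        have e2 : |m - t| = t - m := by rw [abs_sub_comm]; exact abs_of_nonneg (by linarith)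
        have e3 : |s - t| = t - s := by rw [abs_sub_comm]; exact abs_of_nonneg (by linarith)
        rw [e1] at a1; rw [e2] at a2; rw [e3]
        calc d (c s) (c t) ≤ d (c s) (c m) + d (c m) (c t) := tri
          _ ≤ L * (m - s) + L * (t - m) := by linarith
          _ = L * (t - s) := by ring
  intro s hs t ht
  rcases le_total s t with h | h
  · exact key s hs t ht h
  · rw [hm.2.1, abs_sub_comm]; exact key t ht s hs h

lemma nat_sq_le : ∀ n : ℕ, n ^ 2 ≤ 2 ^ (n + 1)
  | 0 => by norm_num
  | 1 => by norm_num
  | 2 => by norm_num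
  | 3 => by norm_num
  | (n + 4) => by
      have ih := nat_sq_le (n + 3)
      have h1 : (n + 4) ^ 2 ≤ 2 * (n + 3) ^ 2 := by ring_nf; omega
      calc (n + 4) ^ 2 ≤ 2 * (n + 3) ^ 2 := h1
        _ ≤ 2 * 2 ^ (n + 3 + 1) := Nat.mul_le_mul_left 2 ih
        _ = 2 ^ (n + 5) := by ring

noncomputable def D0 (δ A : ℝ) : ℝ := 108 * A ^ 2 * (δ + 1) ^ 2 + δ + 1

lemma D0_ge_one {δ A : ℝ} (hδ : 0 < δ) (hA : 1 ≤ A) : 1 ≤ D0 δ A := by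
  have : (0:ℝ) < A ^ 2 := by positivity
  have : (0:ℝ) < (δ + 1) ^ 2 := by positivity
  unfold D0; nlinarith

set_option maxHeartbeats 2000000 in
lemma lemmaB {d : X → X → ℝ} (hm : IsMetricD d) (hgeo : GeodesicSpaceD d)
    {δ : ℝ} (hδ : 0 < δ) (hhyp : GromovHyperbolicWith δ d)
    {A : ℝ} (hA : 1 ≤ A)
    {γ : ℝ → X} {a₁ b₁ : ℝ} (hab : a₁ ≤ b₁)
    (hup : ∀ s ∈ Set.Icc a₁ b₁, ∀ t ∈ Set.Icc a₁ b₁, d (γ s) (γ t) ≤ A * |s - t|)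
    (hlo : ∀ s ∈ Set.Icc a₁ b₁, ∀ t ∈ Set.Icc a₁ b₁, |s - t| ≤ A * d (γ s) (γ t))
    {σ : ℝ → X} {α β : ℝ} (hσ : IsGeodesicOn d σ α β)
    (hσa : σ α = γ a₁) (hσb : σ β = γ b₁) :
    ∀ s ∈ Set.Icc α β, ∃ w ∈ Set.Icc a₁ b₁, d (σ s) (γ w) ≤ D0 δ A := by
  have hA0 : (0:ℝ) < A := lt_of_lt_of_le one_pos hA
  -- the distance-to-γ function and its minimizers
  set f : ℝ → ℝ := fun s => sInf ((fun w => d (σ s) (γ w)) '' Set.Icc a₁ b₁) with hf_def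
  have hmin : ∀ s : ℝ, ∃ w ∈ Set.Icc a₁ b₁,
      f s = d (σ s) (γ w) ∧ ∀ w' ∈ Set.Icc a₁ b₁, d (σ s) (γ w) ≤ d (σ s) (γ w') := by
    intro s
    have hcont : ContinuousOn (fun w => d (σ s) (γ w)) (Set.Icc a₁ b₁) := by
      have hlip : LipschitzOnWith A.toNNReal (fun w => d (σ s) (γ w)) (Set.Icc a₁ b₁) := by
        apply LipschitzOnWith.of_dist_le_mul
        intro x hx y hy
        have h1 := hm.2.2 (σ s) (γ y) (γ x)
        have h2 := hm.2.2 (σ s) (γ x) (γ y)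
        have h3 := hup x hx y hy
        have h4 := hup y hy x hx
        have h5 : d (γ y) (γ x) = d (γ x) (γ y) := hm.2.1 _ _
        rw [Real.dist_eq, Real.dist_eq]
        rw [Real.coe_toNNReal A (le_of_lt hA0)]
        rw [abs_le]
        have habs : |y - x| = |x - y| := abs_sub_comm y x
        rw [habs] at h4
        constructor <;> linarith
      exact hlip.continuousOn
    obtain ⟨w, hw, hwmin⟩ := isCompact_Icc.exists_isMinOn (Set.nonempty_Icc.2 hab) hcont
    refine ⟨w, hw, ?_, fun w' hw' => hwmin hw'⟩
    apply IsLeast.csInf_eq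
    constructor
    · exact ⟨w, hw, rfl⟩
    · rintro y ⟨w', hw', rfl⟩
      exact hwmin hw'
  have hf_le : ∀ s : ℝ, ∀ w' ∈ Set.Icc a₁ b₁, f s ≤ d (σ s) (γ w') := by
    intro s w' hw'
    obtain ⟨w, hw, heq, hle⟩ := hmin s
    rw [heq]; exact hle w' hw'
  have hf_nonneg : ∀ s : ℝ, 0 ≤ f s := by
    intro s
    obtain ⟨w, hw, heq, _⟩ := hmin s
    rw [heq]; exact d_nonneg hm _ _
  have hf_lip : ∀ s ∈ Set.Icc α β, ∀ s' ∈ Set.Icc α β, f s ≤ f s' + |s - s'| := by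
    intro s hs s' hs'
    obtain ⟨w, hw, heq, _⟩ := hmin s'
    have h1 := hf_le s w hw
    have h2 := hm.2.2 (σ s) (σ s') (γ w)
    have h3 : d (σ s) (σ s') = |s - s'| := hσ.2 s hs s' hs'
    linarith [heq ▸ le_refl (f s')]
  have hf_cont : ContinuousOn f (Set.Icc α β) := by
    have hlip : LipschitzOnWith 1 f (Set.Icc α β) := by
      apply LipschitzOnWith.of_dist_le_mul
      intro x hx y hy
      have h1 := hf_lip x hx y hy
      have h2 := hf_lip y hy x hx
      rw [Real.dist_eq, Real.dist_eq, NNReal.coe_one, one_mul, abs_le]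
      rw [abs_sub_comm] at h2
      constructor <;> [linarith [abs_nonneg (x - y)]; linarith]
    exact hlip.continuousOn
  clear_value f
  obtain ⟨s₀, hs₀mem, hs₀max⟩ := isCompact_Icc.exists_isMaxOn
    (Set.nonempty_Icc.2 hσ.1) hf_cont
  set D := f s₀ with hD_def
  clear_value D
  suffices hDD : D ≤ D0 δ A by
    intro s hs
    obtain ⟨w, hw, heq, _⟩ := hmin s
    have hDD' : f s₀ ≤ D0 δ A := by rw [← hD_def]; exact hDD
    exact ⟨w, hw, by rw [← heq]; exact le_trans (hs₀max hs) hDD'⟩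
  by_cases hD1 : D ≤ 1
  · exact le_trans hD1 (D0_ge_one hδ hA)
  push_neg at hD1
  have hD0 : (0:ℝ) < D := lt_trans one_pos hD1
  -- the key estimate via the path construction
  have key : ∀ n : ℕ, 18 * A ^ 2 * D ≤ 2 ^ n → D ≤ δ * n + 1 := by
    intro n hn
    set sy := max α (s₀ - 2 * D) with hsy_def
    set sz := min β (s₀ + 2 * D) with hsz_def
    clear_value sy sz
    have hαsy : α ≤ sy := by rw [hsy_def]; exact le_max_left _ _
    have hsys₀ : sy ≤ s₀ := by rw [hsy_def]; exact max_le hs₀mem.1 (by linarith)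
    have hs₀sz : s₀ ≤ sz := by rw [hsz_def]; exact le_min hs₀mem.2 (by linarith)
    have hszβ : sz ≤ β := by rw [hsz_def]; exact min_le_left _ _
    have hsy_mem : sy ∈ Set.Icc α β := ⟨hαsy, le_trans hsys₀ (le_trans hs₀sz hszβ)⟩
    have hsz_mem : sz ∈ Set.Icc α β := ⟨le_trans hαsy (le_trans hsys₀ hs₀sz), hszβ⟩
    obtain ⟨ty, hty, htyval, htymin⟩ := hmin sy
    obtain ⟨tz, htz, htzval, htzmin⟩ := hmin sz
    have hfy : f sy ≤ D := by rw [hD_def]; exact hs₀max hsy_mem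
    have hfz : f sz ≤ D := by rw [hD_def]; exact hs₀max hsz_mem
    have hdyz : d (σ sy) (σ sz) = sz - sy := by
      rw [hσ.2 sy hsy_mem sz hsz_mem, abs_sub_comm,
        abs_of_nonneg (by linarith : (0:ℝ) ≤ sz - sy)]
    have hszsy : sz - sy ≤ 4 * D := by
      have h1 : sy ≥ s₀ - 2 * D := by rw [hsy_def]; exact le_max_right _ _
      have h2 : sz ≤ s₀ + 2 * D := by rw [hsz_def]; exact min_le_right _ _
      linarith
    have hdtt : d (γ ty) (γ tz) ≤ 6 * D := by
      have t1 := hm.2.2 (γ ty) (σ sy) (γ tz)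
      have t2 := hm.2.2 (σ sy) (σ sz) (γ tz)
      have e1 : d (γ ty) (σ sy) = d (σ sy) (γ ty) := hm.2.1 _ _
      linarith [htyval ▸ hfy, htzval ▸ hfz]
    have htt : |ty - tz| ≤ 6 * A * D := by
      have := hlo ty hty tz htz
      nlinarith [d_nonneg hm (γ ty) (γ tz)]
    obtain ⟨g₁, p₁, q₁, hg₁, e₁a, e₁b⟩ := hgeo (σ sy) (γ ty)
    obtain ⟨g₂, p₂, q₂, hg₂, e₂a, e₂b⟩ := hgeo (γ tz) (σ sz)
    have len₁ : q₁ - p₁ = f sy := by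
      have := hg₁.2 p₁ ⟨le_refl _, hg₁.1⟩ q₁ ⟨hg₁.1, le_refl _⟩
      rw [e₁a, e₁b] at this
      rw [htyval, this, abs_sub_comm, abs_of_nonneg (by linarith [hg₁.1] : (0:ℝ) ≤ q₁ - p₁)]
    have len₂ : q₂ - p₂ = f sz := by
      have h := hg₂.2 p₂ ⟨le_refl _, hg₂.1⟩ q₂ ⟨hg₂.1, le_refl _⟩
      rw [e₂a, e₂b] at h
      have h' : d (σ sz) (γ tz) = |p₂ - q₂| := by rw [hm.2.1]; exact h
      rw [htzval, h', abs_sub_comm, abs_of_nonneg (by linarith [hg₂.1] : (0:ℝ) ≤ q₂ - p₂)]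
    have hk₁ : 0 ≤ q₁ - p₁ := by linarith [hg₁.1]
    have hk₂ : 0 ≤ q₂ - p₂ := by linarith [hg₂.1]
    have hk₁D : q₁ - p₁ ≤ D := by rw [len₁]; exact hfy
    have hk₂D : q₂ - p₂ ≤ D := by rw [len₂]; exact hfz
    set L := 6 * A ^ 2 * D with hL_def
    clear_value L
    have hDL : D ≤ L := by rw [hL_def]; nlinarith [hD0, sq_nonneg (A - 1)]
    obtain ⟨c, hc_left, hc_mid, hc_right⟩ :
        ∃ c : ℝ → X,
          (∀ w ∈ Set.Icc (0:ℝ) 1, c w = g₁ (p₁ + w * (q₁ - p₁))) ∧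
          (∀ w ∈ Set.Icc (1:ℝ) 2, c w = γ (ty + (w - 1) * (tz - ty))) ∧
          (∀ w ∈ Set.Icc (2:ℝ) 3, c w = g₂ (p₂ + (w - 2) * (q₂ - p₂))) := by
      refine ⟨fun w => if w ≤ 1 then g₁ (p₁ + w * (q₁ - p₁))
        else if w ≤ 2 then γ (ty + (w - 1) * (tz - ty))
        else g₂ (p₂ + (w - 2) * (q₂ - p₂)), ?_, ?_, ?_⟩
      · intro w hw; simp only; rw [if_pos hw.2]
      · intro w hw
        by_cases h1 : w ≤ 1
        · have hw1 : w = 1 := le_antisymm h1 hw.1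
          subst hw1
          simp only
          rw [if_pos (le_refl (1:ℝ)), show p₁ + 1 * (q₁ - p₁) = q₁ by ring, e₁b]
          norm_num
        · simp only; rw [if_neg h1, if_pos hw.2]
      · intro w hw
        by_cases h2 : w ≤ 2
        · have hw2 : w = 2 := le_antisymm h2 hw.1
          subst hw2
          simp only
          rw [if_neg (by norm_num), if_pos (le_refl (2:ℝ)),
            show ty + (2 - 1) * (tz - ty) = tz by ring, ← e₂a,
            show p₂ + ((2:ℝ) - 2) * (q₂ - p₂) = p₂ by ring]
        · simp only; rw [if_neg (by linarith), if_neg h2]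
    have hc0 : c 0 = σ sy := by
      rw [hc_left 0 ⟨le_refl _, by norm_num⟩, show p₁ + 0 * (q₁ - p₁) = p₁ by ring, e₁a]
    have hc3 : c 3 = σ sz := by
      rw [hc_right 3 ⟨by norm_num, le_refl _⟩, show p₂ + ((3:ℝ) - 2) * (q₂ - p₂) = q₂ by ring,
        e₂b]
    have hmid_mem : ∀ w ∈ Set.Icc (1:ℝ) 2, ty + (w - 1) * (tz - ty) ∈ Set.Icc a₁ b₁ := by
      intro w hw
      rcases le_total ty tz with h | h
      · constructor
        · nlinarith [hty.1, hw.1, hw.2]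
        · nlinarith [htz.2, hw.1, hw.2]
      · constructor
        · nlinarith [htz.1, hw.1, hw.2]
        · nlinarith [hty.2, hw.1, hw.2]
    -- Lipschitz bounds for the three pieces
    have lip1 : ∀ s ∈ Set.Icc (0:ℝ) 1, ∀ t ∈ Set.Icc (0:ℝ) 1,
        d (c s) (c t) ≤ L * |s - t| := by
      intro s hs t ht
      rw [hc_left s hs, hc_left t ht]
      have hms : p₁ + s * (q₁ - p₁) ∈ Set.Icc p₁ q₁ :=
        ⟨by nlinarith [hs.1], by nlinarith [hs.2]⟩
      have hmt : p₁ + t * (q₁ - p₁) ∈ Set.Icc p₁ q₁ :=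
        ⟨by nlinarith [ht.1], by nlinarith [ht.2]⟩
      rw [hg₁.2 _ hms _ hmt, show p₁ + s * (q₁ - p₁) - (p₁ + t * (q₁ - p₁))
        = (q₁ - p₁) * (s - t) by ring, abs_mul, abs_of_nonneg hk₁]
      have hk₁L : q₁ - p₁ ≤ L := le_trans hk₁D hDL
      nlinarith [abs_nonneg (s - t)]
    have lip2 : ∀ s ∈ Set.Icc (1:ℝ) 2, ∀ t ∈ Set.Icc (1:ℝ) 2,
        d (c s) (c t) ≤ L * |s - t| := by
      intro s hs t ht
      rw [hc_mid s hs, hc_mid t ht]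
      have h1 := hup _ (hmid_mem s hs) _ (hmid_mem t ht)
      have e : |ty + (s - 1) * (tz - ty) - (ty + (t - 1) * (tz - ty))|
          = |tz - ty| * |s - t| := by
        rw [show ty + (s - 1) * (tz - ty) - (ty + (t - 1) * (tz - ty))
          = (tz - ty) * (s - t) by ring, abs_mul]
      rw [e] at h1
      have h2 : |tz - ty| ≤ 6 * A * D := by rw [abs_sub_comm]; exact htt
      have h6 : A * (6 * A * D) = L := by rw [hL_def]; ring
      refine le_trans h1 ?_
      have h3 : A * |tz - ty| ≤ L := by
        rw [← h6]; exact mul_le_mul_of_nonneg_left h2 (le_of_lt hA0)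
      nlinarith [abs_nonneg (s - t), h3]
    have lip3 : ∀ s ∈ Set.Icc (2:ℝ) 3, ∀ t ∈ Set.Icc (2:ℝ) 3,
        d (c s) (c t) ≤ L * |s - t| := by
      intro s hs t ht
      rw [hc_right s hs, hc_right t ht]
      have hms : p₂ + (s - 2) * (q₂ - p₂) ∈ Set.Icc p₂ q₂ :=
        ⟨by nlinarith [hs.1], by nlinarith [hs.2]⟩
      have hmt : p₂ + (t - 2) * (q₂ - p₂) ∈ Set.Icc p₂ q₂ :=
        ⟨by nlinarith [ht.1], by nlinarith [ht.2]⟩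
      rw [hg₂.2 _ hms _ hmt, show p₂ + (s - 2) * (q₂ - p₂) - (p₂ + (t - 2) * (q₂ - p₂))
        = (q₂ - p₂) * (s - t) by ring, abs_mul, abs_of_nonneg hk₂]
      have hk₂L : q₂ - p₂ ≤ L := le_trans hk₂D hDL
      nlinarith [abs_nonneg (s - t)]
    have lipc : ∀ s ∈ Set.Icc (0:ℝ) 3, ∀ t ∈ Set.Icc (0:ℝ) 3,
        d (c s) (c t) ≤ L * |s - t| :=
      lip_concat hm (by norm_num) (by norm_num)
        (lip_concat hm (by norm_num) (by norm_num) lip1 lip2) lip3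
    have hσ' : IsGeodesicOn d σ sy sz := geo_restrict hσ hαsy (le_trans hsys₀ hs₀sz) hszβ
    have hn' : L * (3 - 0) ≤ 2 ^ n := by
      rw [hL_def]; calc 6 * A ^ 2 * D * (3 - 0) = 18 * A ^ 2 * D := by ring
        _ ≤ 2 ^ n := hn
    obtain ⟨w, hw, hdw⟩ := lemmaA hm hgeo hδ hhyp c n 0 3 sy sz σ (by norm_num)
      lipc hσ' hc0.symm hc3.symm hn' s₀ ⟨hsys₀, hs₀sz⟩
    -- lower bound: d (σ s₀) (c w) ≥ D
    have hlow : D ≤ d (σ s₀) (c w) := by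
      by_cases hw1 : w ≤ 1
      · -- on the first geodesic piece
        rw [hc_left w ⟨hw.1, hw1⟩]
        by_cases hedge : α ≤ s₀ - 2 * D
        · have hsy_eq : sy = s₀ - 2 * D := by rw [hsy_def]; exact max_eq_right hedge
          have hd1 : d (σ s₀) (σ sy) = 2 * D := by
            rw [hσ.2 s₀ hs₀mem sy hsy_mem, hsy_eq,
              show s₀ - (s₀ - 2 * D) = 2 * D by ring, abs_of_nonneg (by linarith)]
          have hmw : p₁ + w * (q₁ - p₁) ∈ Set.Icc p₁ q₁ :=
            ⟨by nlinarith [hw.1], by nlinarith⟩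
          have hd2 : d (g₁ (p₁ + w * (q₁ - p₁))) (σ sy) ≤ D := by
            rw [← e₁a, hm.2.1]
            rw [hg₁.2 p₁ ⟨le_refl _, hg₁.1⟩ _ hmw,
              show p₁ - (p₁ + w * (q₁ - p₁)) = -(w * (q₁ - p₁)) by ring, abs_neg,
              abs_of_nonneg (by nlinarith [hw.1])]
            nlinarith [hw.1]
          have tri := hm.2.2 (σ s₀) (g₁ (p₁ + w * (q₁ - p₁))) (σ sy)
          linarith
        · -- sy = α, degenerate first piece
          have hsyα : sy = α := by rw [hsy_def]; exact max_eq_left (by linarith [not_le.1 hedge])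
          have hfα : f sy = 0 := by
            rw [hsyα]
            have h1 : f α ≤ d (σ α) (γ a₁) := hf_le α a₁ ⟨le_refl _, hab⟩
            have h2 : d (σ α) (γ a₁) = 0 := by rw [hσa]; exact (hm.1 _ _).2 rfl
            have h3 := hf_nonneg α
            linarith
          have hk0 : q₁ - p₁ = 0 := by rw [len₁, hfα]
          have : g₁ (p₁ + w * (q₁ - p₁)) = γ ty := by
            rw [hk0, mul_zero, add_zero, show p₁ = q₁ by linarith, e₁b]
          rw [this, hD_def]
          exact hf_le s₀ ty hty
      · by_cases hw2 : w ≤ 2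
        · rw [hc_mid w ⟨le_of_lt (not_le.1 hw1), hw2⟩, hD_def]
          exact hf_le s₀ _ (hmid_mem w ⟨le_of_lt (not_le.1 hw1), hw2⟩)
        · -- on the last geodesic piece
          have hwmem : w ∈ Set.Icc (2:ℝ) 3 := ⟨le_of_lt (not_le.1 hw2), hw.2⟩
          rw [hc_right w hwmem]
          by_cases hedge : s₀ + 2 * D ≤ β
          · have hsz_eq : sz = s₀ + 2 * D := by rw [hsz_def]; exact min_eq_right hedge
            have hd1 : d (σ s₀) (σ sz) = 2 * D := by
              rw [hσ.2 s₀ hs₀mem sz hsz_mem, hsz_eq,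
                show s₀ - (s₀ + 2 * D) = -(2 * D) by ring, abs_neg,
                abs_of_nonneg (by linarith)]
            have hmw : p₂ + (w - 2) * (q₂ - p₂) ∈ Set.Icc p₂ q₂ :=
              ⟨by nlinarith [hwmem.1], by nlinarith [hwmem.2]⟩
            have hd2 : d (g₂ (p₂ + (w - 2) * (q₂ - p₂))) (σ sz) ≤ D := by
              rw [← e₂b, hg₂.2 _ hmw q₂ ⟨hg₂.1, le_refl _⟩,
                show p₂ + (w - 2) * (q₂ - p₂) - q₂ = -((3 - w) * (q₂ - p₂)) by ring,
                abs_neg, abs_of_nonneg (by nlinarith [hwmem.2] : (0:ℝ) ≤ (3 - w) * (q₂ - p₂))]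
              nlinarith [hwmem.1]
            have tri := hm.2.2 (σ s₀) (g₂ (p₂ + (w - 2) * (q₂ - p₂))) (σ sz)
            linarith
          · have hszβ' : sz = β := by rw [hsz_def]; exact min_eq_left (by linarith [not_le.1 hedge])
            have hfβ : f sz = 0 := by
              rw [hszβ']
              have h1 : f β ≤ d (σ β) (γ b₁) := hf_le β b₁ ⟨hab, le_refl _⟩
              have h2 : d (σ β) (γ b₁) = 0 := by rw [hσb]; exact (hm.1 _ _).2 rfl
              linarith [hf_nonneg β]
            have hk0 : q₂ - p₂ = 0 := by rw [len₂, hfβ]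
            have heq : g₂ (p₂ + (w - 2) * (q₂ - p₂)) = γ tz := by
              rw [hk0, mul_zero, add_zero, e₂a]
            rw [heq, hD_def]
            exact hf_le s₀ tz htz
    linarith [hdw, hlow]
  -- numeric wrap-up
  obtain ⟨n₁, hn₁⟩ := pow_unbounded_of_one_lt (18 * A ^ 2 * D) (one_lt_two (α := ℝ))
  have hex : ∃ n : ℕ, 18 * A ^ 2 * D ≤ (2:ℝ) ^ n := ⟨n₁, le_of_lt hn₁⟩
  have hspec : 18 * A ^ 2 * D ≤ (2:ℝ) ^ (Nat.find hex) := Nat.find_spec hex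
  by_cases h0 : Nat.find hex = 0
  · rw [h0] at hspec
    have hk := key 0 hspec
    simp only [Nat.cast_zero, mul_zero, zero_add] at hk
    linarith [D0_ge_one hδ hA]
  · obtain ⟨m, hmeq⟩ := Nat.exists_eq_succ_of_ne_zero h0
    have hmin' : ¬(18 * A ^ 2 * D ≤ (2:ℝ) ^ m) := Nat.find_min hex (by omega)
    push_neg at hmin'
    have hkey : D ≤ δ * (m + 1) + 1 := by
      have hk := key (Nat.find hex) hspec
      rw [hmeq] at hk
      push_cast at hk
      linarith
    have hsq : ((m:ℝ)) ^ 2 ≤ 2 ^ (m + 1) := by exact_mod_cast nat_sq_le m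
    rw [hmeq] at hspec
    have hm2 : ((m:ℝ)) ^ 2 < 36 * A ^ 2 * (δ + 1) * ((m:ℝ) + 1) := by
      have h1 : ((m:ℝ)) ^ 2 < 36 * A ^ 2 * D := by
        have h2 : (2:ℝ) ^ (m + 1) = 2 * 2 ^ m := by ring
        linarith [hsq, h2 ▸ hsq]
      have h3 : 36 * A ^ 2 * D ≤ 36 * A ^ 2 * (δ * ((m:ℝ) + 1) + 1) := by nlinarith
      have h4 : 36 * A ^ 2 * (δ * ((m:ℝ) + 1) + 1) ≤ 36 * A ^ 2 * (δ + 1) * ((m:ℝ) + 1) := by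
        nlinarith [Nat.cast_nonneg (α := ℝ) m]
      linarith
    have hC0 : (0:ℝ) < 36 * A ^ 2 * (δ + 1) := by positivity
    have hmlt : (m:ℝ) < 2 * (36 * A ^ 2 * (δ + 1)) := by
      by_cases hm1 : (1:ℝ) ≤ (m:ℝ)
      · nlinarith
      · have hm0 : (m:ℝ) = 0 := by
          have : m = 0 := by
            have := not_le.1 hm1
            exact_mod_cast Nat.lt_one_iff.1 (by exact_mod_cast this)
          simp [this]
        rw [hm0]; linarith
    have hfin : D ≤ δ * (2 * (36 * A ^ 2 * (δ + 1)) + 1) + 1 := by nlinarith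
    have hbound : 72 * A ^ 2 * δ * (δ + 1) ≤ 108 * A ^ 2 * (δ + 1) ^ 2 := by
      nlinarith [mul_nonneg (mul_nonneg (sq_nonneg A) (by linarith : (0:ℝ) ≤ δ + 1))
        (by linarith : (0:ℝ) ≤ 36 * δ + 108)]
    unfold D0
    nlinarith

noncomputable def H0 (δ A : ℝ) : ℝ := (2 * A ^ 2 + 1) * (D0 δ A + 1)

/-- Lemma C: every point of the quasi-geodesic is close to the geodesic with the
same endpoints. -/
lemma lemmaC {d : X → X → ℝ} (hm : IsMetricD d) (hgeo : GeodesicSpaceD d)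
    {δ : ℝ} (hδ : 0 < δ) (hhyp : GromovHyperbolicWith δ d)
    {A : ℝ} (hA : 1 ≤ A)
    {γ : ℝ → X} {a₁ b₁ : ℝ} (hab : a₁ ≤ b₁)
    (hup : ∀ s ∈ Set.Icc a₁ b₁, ∀ t ∈ Set.Icc a₁ b₁, d (γ s) (γ t) ≤ A * |s - t|)
    (hlo : ∀ s ∈ Set.Icc a₁ b₁, ∀ t ∈ Set.Icc a₁ b₁, |s - t| ≤ A * d (γ s) (γ t))
    {σ : ℝ → X} {α β : ℝ} (hσ : IsGeodesicOn d σ α β)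
    (hσa : σ α = γ a₁) (hσb : σ β = γ b₁) :
    ∀ t ∈ Set.Icc a₁ b₁, ∃ s ∈ Set.Icc α β, d (γ t) (σ s) ≤ H0 δ A := by
  intro t ht
  have hA0 : (0:ℝ) < A := lt_of_lt_of_le one_pos hA
  have hD0pos : (0:ℝ) < D0 δ A := lt_of_lt_of_le one_pos (D0_ge_one hδ hA)
  set S : Set ℝ := {s | s ∈ Set.Icc α β ∧ ∃ t' ∈ Set.Icc a₁ t, d (σ s) (γ t') ≤ D0 δ A}
    with hS_def
  have hαS : α ∈ S := by
    refine ⟨⟨le_refl _, hσ.1⟩, a₁, ⟨le_refl _, ht.1⟩, ?_⟩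
    rw [hσa, (hm.1 _ _).2 rfl]
    linarith
  have hne : S.Nonempty := ⟨α, hαS⟩
  have hbdd : BddAbove S := ⟨β, fun s hs => hs.1.2⟩
  set s₀ := sSup S with hs₀_def
  have hs₀α : α ≤ s₀ := le_csSup hbdd hαS
  have hs₀β : s₀ ≤ β := csSup_le hne (fun s hs => hs.1.2)
  have hs₀mem : s₀ ∈ Set.Icc α β := ⟨hs₀α, hs₀β⟩
  -- a point slightly below s₀ lies in S
  have hbelow : ∃ t₁ ∈ Set.Icc a₁ t, d (σ s₀) (γ t₁) ≤ D0 δ A + 1 := by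
    obtain ⟨s, hsS, hs⟩ := exists_lt_of_lt_csSup hne (by linarith : s₀ - 1 < sSup S)
    have hss₀ : s ≤ s₀ := le_csSup hbdd hsS
    obtain ⟨hsmem, t₁, ht₁, hd⟩ := hsS
    have hdist : d (σ s₀) (σ s) = |s₀ - s| := hσ.2 s₀ hs₀mem s hsmem
    have habs : |s₀ - s| ≤ 1 := by rw [abs_of_nonneg (by linarith)]; linarith
    refine ⟨t₁, ht₁, ?_⟩
    have tri := hm.2.2 (σ s₀) (σ s) (γ t₁)
    linarith
  have habove : ∃ t₂ ∈ Set.Icc t b₁, d (σ s₀) (γ t₂) ≤ D0 δ A + 1 := by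
    by_cases hcase : s₀ = β
    · refine ⟨b₁, ⟨ht.2, le_refl _⟩, ?_⟩
      rw [hcase, hσb, (hm.1 _ _).2 rfl]
      linarith
    · have hs₀ltβ : s₀ < β := lt_of_le_of_ne hs₀β hcase
      set s := min β (s₀ + 1) with hs_def
      have hs₀s : s₀ < s := by rw [hs_def]; exact lt_min hs₀ltβ (by linarith)
      have hs1 : s - s₀ ≤ 1 := by
        have := min_le_right β (s₀ + 1)
        rw [hs_def]; linarith [min_le_right β (s₀ + 1)]
      have hsmem : s ∈ Set.Icc α β := ⟨by linarith, by rw [hs_def]; exact min_le_left _ _⟩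
      obtain ⟨w, hw, hdw⟩ := lemmaB hm hgeo hδ hhyp hA hab hup hlo hσ hσa hσb s hsmem
      have hsnotS : s ∉ S := fun hmem => absurd (le_csSup hbdd hmem) (not_le.2 hs₀s)
      have hwt : t < w := by
        by_contra hwt
        push_neg at hwt
        exact hsnotS ⟨hsmem, w, ⟨hw.1, hwt⟩, hdw⟩
      have hdist : d (σ s₀) (σ s) = |s₀ - s| := hσ.2 s₀ hs₀mem s hsmem
      have habs : |s₀ - s| ≤ 1 := by
        rw [abs_sub_comm, abs_of_nonneg (by linarith)]; linarith
      refine ⟨w, ⟨le_of_lt hwt, hw.2⟩, ?_⟩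
      have tri := hm.2.2 (σ s₀) (σ s) (γ w)
      linarith
  obtain ⟨t₁, ht₁, hd₁⟩ := hbelow
  obtain ⟨t₂, ht₂, hd₂⟩ := habove
  have ht₁mem : t₁ ∈ Set.Icc a₁ b₁ := ⟨ht₁.1, le_trans ht₁.2 ht.2⟩
  have ht₂mem : t₂ ∈ Set.Icc a₁ b₁ := ⟨le_trans ht.1 ht₂.1, ht₂.2⟩
  have hd12 : d (γ t₁) (γ t₂) ≤ 2 * (D0 δ A + 1) := by
    have tri := hm.2.2 (γ t₁) (σ s₀) (γ t₂)
    have e1 : d (γ t₁) (σ s₀) = d (σ s₀) (γ t₁) := hm.2.1 _ _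
    linarith
  have ht12 : t₂ - t₁ ≤ 2 * A * (D0 δ A + 1) := by
    have := hlo t₁ ht₁mem t₂ ht₂mem
    have habs : t₂ - t₁ ≤ |t₁ - t₂| := by
      rw [abs_sub_comm]; exact le_abs_self _
    nlinarith [d_nonneg hm (γ t₁) (γ t₂)]
  refine ⟨s₀, hs₀mem, ?_⟩
  have tri := hm.2.2 (γ t) (γ t₁) (σ s₀)
  have e1 : d (γ t₁) (σ s₀) = d (σ s₀) (γ t₁) := hm.2.1 _ _
  have hup1 := hup t ht t₁ ht₁mem
  have habs : |t - t₁| = t - t₁ := abs_of_nonneg (by linarith [ht₁.2])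
  have htt1 : t - t₁ ≤ t₂ - t₁ := by linarith [ht₂.1]
  have hfinal : d (γ t) (σ s₀) ≤ A * (t₂ - t₁) + (D0 δ A + 1) := by
    rw [habs] at hup1
    nlinarith
  have : A * (t₂ - t₁) ≤ 2 * A ^ 2 * (D0 δ A + 1) := by nlinarith
  rw [H0]
  nlinarith

end GHBL

open GHBL in
/-- Gromov hyperbolicity of geodesic metric spaces is invariant under
bi-Lipschitz equivalence of the distance. -/
theorem gromovHyperbolic_of_biLipschitz
    (X : Type*) (d₁ d₂ : X → X → ℝ)
    (hm₁ : IsMetricD d₁) (hm₂ : IsMetricD d₂)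
    (hgeo₁ : GeodesicSpaceD d₁) (hgeo₂ : GeodesicSpaceD d₂)
    (A : ℝ) (hA : 1 ≤ A)
    (hbl : ∀ x y : X, A⁻¹ * d₁ x y ≤ d₂ x y ∧ d₂ x y ≤ A * d₁ x y)
    (h1 : GromovHyperbolic d₁) :
    GromovHyperbolic d₂ := by
  obtain ⟨δ, hδ, hhyp⟩ := h1
  have hA0 : (0:ℝ) < A := lt_of_lt_of_le one_pos hA
  have hD0pos : (0:ℝ) < D0 δ A := lt_of_lt_of_le one_pos (D0_ge_one hδ hA)
  have hH0pos : (0:ℝ) < H0 δ A := by rw [H0]; positivity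
  -- upper/lower quasi-geodesic bounds for d₂-geodesics, w.r.t. d₁
  have hquasi : ∀ (γ : ℝ → X) (a b : ℝ), IsGeodesicOn d₂ γ a b →
      (∀ s ∈ Set.Icc a b, ∀ t ∈ Set.Icc a b, d₁ (γ s) (γ t) ≤ A * |s - t|) ∧
      (∀ s ∈ Set.Icc a b, ∀ t ∈ Set.Icc a b, |s - t| ≤ A * d₁ (γ s) (γ t)) := by
    intro γ a b hγ
    constructor
    · intro s hs t ht
      have h2 := (hbl (γ s) (γ t)).1
      have := hγ.2 s hs t ht
      rw [← this]
      have : A⁻¹ * d₁ (γ s) (γ t) ≤ d₂ (γ s) (γ t) := h2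
      calc d₁ (γ s) (γ t) = A * (A⁻¹ * d₁ (γ s) (γ t)) := by
            field_simp
        _ ≤ A * d₂ (γ s) (γ t) := by nlinarith
    · intro s hs t ht
      have h2 := (hbl (γ s) (γ t)).2
      rw [← hγ.2 s hs t ht]
      exact h2
  refine ⟨A * (H0 δ A + δ + D0 δ A), by positivity, ?_⟩
  intro γ₁ γ₂ γ₃ a₁ b₁ a₂ b₂ a₃ b₃ hγ₁ hγ₂ hγ₃ hc₁ hc₂ hc₃ t ht
  obtain ⟨σ₁, α₁, β₁, hσ₁, e₁a, e₁b⟩ := hgeo₁ (γ₁ a₁) (γ₁ b₁)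
  obtain ⟨σ₂, α₂, β₂, hσ₂, e₂a, e₂b⟩ := hgeo₁ (γ₂ a₂) (γ₂ b₂)
  obtain ⟨σ₃, α₃, β₃, hσ₃, e₃a, e₃b⟩ := hgeo₁ (γ₃ a₃) (γ₃ b₃)
  obtain ⟨hup₁, hlo₁⟩ := hquasi γ₁ a₁ b₁ hγ₁
  obtain ⟨hup₂, hlo₂⟩ := hquasi γ₂ a₂ b₂ hγ₂
  obtain ⟨hup₃, hlo₃⟩ := hquasi γ₃ a₃ b₃ hγ₃
  -- γ₁ t is close to σ₁
  obtain ⟨s, hs, hds⟩ := lemmaC hm₁ hgeo₁ hδ hhyp hA hγ₁.1 hup₁ hlo₁ hσ₁ e₁a e₁b t ht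
  -- thinness of the d₁-triangle
  have hkey := hhyp σ₁ σ₂ σ₃ α₁ β₁ α₂ β₂ α₃ β₃ hσ₁ hσ₂ hσ₃
    (by rw [e₁b, e₂a, hc₁]) (by rw [e₂b, e₃a, hc₂]) (by rw [e₃b, e₁a, hc₃]) s hs
  have hd₂le : ∀ x y : X, d₂ x y ≤ A * d₁ x y := fun x y => (hbl x y).2
  rcases hkey with ⟨s', hs', hd'⟩ | ⟨s', hs', hd'⟩
  · obtain ⟨w, hw, hdw⟩ := lemmaB hm₁ hgeo₁ hδ hhyp hA hγ₂.1 hup₂ hlo₂ hσ₂ e₂a e₂b s' hs'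
    refine Or.inl ⟨w, hw, ?_⟩
    have tri1 := hm₁.2.2 (γ₁ t) (σ₁ s) (γ₂ w)
    have tri2 := hm₁.2.2 (σ₁ s) (σ₂ s') (γ₂ w)
    have := hd₂le (γ₁ t) (γ₂ w)
    nlinarith [d_nonneg hm₁ (γ₁ t) (γ₂ w)]
  · obtain ⟨w, hw, hdw⟩ := lemmaB hm₁ hgeo₁ hδ hhyp hA hγ₃.1 hup₃ hlo₃ hσ₃ e₃a e₃b s' hs'
    refine Or.inr ⟨w, hw, ?_⟩
    have tri1 := hm₁.2.2 (γ₁ t) (σ₁ s) (γ₃ w)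
    have tri2 := hm₁.2.2 (σ₁ s) (σ₃ s') (γ₃ w)
    have := hd₂le (γ₁ t) (γ₃ w)
    nlinarith [d_nonneg hm₁ (γ₁ t) (γ₃ w)]
end
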